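/- Fix an integer p ≥ 2, f ∈ 𝓕, and a sequence (κ_n) of nonzero real numbers with κ_n → 0. Define E_{n1} := c_p ∫_{−1}^{1} (1−s²)^{(p−3)/2} log f(κ_n s²) ds. Then, as n → ∞, E_{n1} = κ_n/p + (3 κ_n² / (2 p (p+2))) (f''(0) − 1) + o(κ_n²). -/

import Mathlib

/-!
Near `0`, `log f x = x + (f''(0) - 1) x² / 2 + o(x²)`: this is the Peano form of Taylor's theorem
for `log ∘ f`, whose second derivative at `0` is `(f''(0) f(0) - f'(0)²) / f(0)² = f''(0) - 1`.
Substituting `x = κ s²` and integrating against `(1 - s²)^a`, `a = (p - 3)/2`, leaves the moments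
`J_k = ∫ s^k (1 - s²)^a`. Integrating `s^(k+1) (1 - s²)^(a+1)` by parts gives
`(2a + k + 3) J_{k+2} = (k + 1) J_k`, hence `c_p J_2 = 1/p` and `c_p J_4 = 3/(p(p+2))`, while the
remainder is at most `ε κ² ∫ (1 - s²)^a` as soon as `|κ| < δ(ε)`.
-/

open MeasureTheory Filter Real Asymptotics
open scoped ENNReal NNReal Topology

noncomputable section

def c0 (p : ℕ) : ℝ := 1 / ∫ s in (-1:ℝ)..1, (1 - s ^ 2) ^ (((p : ℝ) - 3) / 2)

section Weight

variable {a : ℝ}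

theorem intervalIntegrable_one_sub_sq_rpow (ha : -1 < a) :
    IntervalIntegrable (fun s : ℝ => (1 - s ^ 2) ^ a) volume (-1) 1 := by
  rcases le_or_gt 0 a with ha0 | ha0
  · exact (by fun_prop : Continuous fun s : ℝ => 1 - s ^ 2).rpow_const
      (fun _ => Or.inr ha0) |>.intervalIntegrable _ _
  -- for `a < 0`, `(1 - s²)^a ≤ (1 - |s|)^a` is dominated by the integrable endpoint singularities
  have hdom : IntervalIntegrable (fun s : ℝ => (1 - s) ^ a + (1 + s) ^ a) volume (-1) 1 := by
    have h := intervalIntegral.intervalIntegrable_rpow' (a := 0) (b := 2) ha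
    have h₁ := h.comp_sub_left 1
    have h₂ := h.comp_add_left 1
    norm_num at h₁ h₂
    exact h₁.symm.add h₂
  refine hdom.mono_fun' ((measurable_const.sub (measurable_id.pow_const 2)).pow_const a
    |>.aestronglyMeasurable) ?_
  rw [Set.uIoc_of_le (by norm_num)]
  filter_upwards [ae_restrict_mem measurableSet_Ioc,
    ae_restrict_of_ae (Measure.ae_ne volume (1 : ℝ))] with s ⟨hs₁, hs₂⟩ hs
  have hs₂ : s < 1 := lt_of_le_of_ne hs₂ hs
  rw [norm_of_nonneg (rpow_nonneg (by nlinarith) a)]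
  have h₁ := rpow_nonneg (by linarith : (0 : ℝ) ≤ 1 - s) a
  have h₂ := rpow_nonneg (by linarith : (0 : ℝ) ≤ 1 + s) a
  rcases le_or_gt 0 s with hs0 | hs0
  · have := rpow_le_rpow_of_nonpos (by linarith) (by nlinarith : 1 - s ≤ 1 - s ^ 2) ha0.le
    linarith
  · have := rpow_le_rpow_of_nonpos (by linarith) (by nlinarith : 1 + s ≤ 1 - s ^ 2) ha0.le
    linarith

theorem intervalIntegrable_pow_mul_one_sub_sq_rpow (ha : -1 < a) (k : ℕ) :
    IntervalIntegrable (fun s : ℝ => s ^ k * (1 - s ^ 2) ^ a) volume (-1) 1 :=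
  (intervalIntegrable_one_sub_sq_rpow ha).continuousOn_mul (continuous_pow k).continuousOn

theorem integral_pow_add_two_mul_one_sub_sq_rpow (ha : -1 < a) (k : ℕ) :
    (2 * a + k + 3) * ∫ s in (-1 : ℝ)..1, s ^ (k + 2) * (1 - s ^ 2) ^ a
      = (k + 1) * ∫ s in (-1 : ℝ)..1, s ^ k * (1 - s ^ 2) ^ a := by
  set G : ℝ → ℝ := fun s => s ^ (k + 1) * (1 - s ^ 2) ^ (a + 1)
  have hG : ∀ s ∈ Set.Ioo (-1 : ℝ) 1, HasDerivAt G
      ((k + 1) * (s ^ k * (1 - s ^ 2) ^ a)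
        - (2 * a + k + 3) * (s ^ (k + 2) * (1 - s ^ 2) ^ a)) s := by
    rintro s ⟨hs₁, hs₂⟩
    have hpos : 0 < 1 - s ^ 2 := by nlinarith
    have h := (hasDerivAt_pow (k + 1) s).fun_mul
      (((hasDerivAt_pow 2 s).const_sub 1).rpow_const (p := a + 1) (Or.inl hpos.ne'))
    refine h.congr_deriv ?_
    rw [rpow_add_one hpos.ne', add_sub_cancel_right]
    push_cast
    ring
  have hGcont : ContinuousOn G (Set.Icc (-1) 1) :=
    ((continuous_pow (k + 1)).mul ((by fun_prop : Continuous fun s : ℝ => 1 - s ^ 2).rpow_const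
      fun _ => Or.inr (by linarith))).continuousOn
  have hint := fun j => intervalIntegrable_pow_mul_one_sub_sq_rpow ha j
  have hftc := intervalIntegral.integral_eq_sub_of_hasDeriv_right_of_le (by norm_num) hGcont
    (fun s hs => (hG s hs).hasDerivWithinAt)
    (((hint k).const_mul _).sub ((hint (k + 2)).const_mul _))
  have hG₁ : G 1 = 0 := by simp [G, zero_rpow (by linarith : a + 1 ≠ 0)]
  have hG₂ : G (-1) = 0 := by simp [G, zero_rpow (by linarith : a + 1 ≠ 0)]
  rw [intervalIntegral.integral_sub ((hint k).const_mul _) ((hint (k + 2)).const_mul _),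
    intervalIntegral.integral_const_mul, intervalIntegral.integral_const_mul, hG₁, hG₂] at hftc
  linarith

end Weight

theorem c0_mul_integral_sq_and_pow_four {p : ℕ} (hp : 1 < p) :
    c0 p * (∫ s in (-1 : ℝ)..1, s ^ 2 * (1 - s ^ 2) ^ (((p : ℝ) - 3) / 2)) = 1 / p ∧
    c0 p * (∫ s in (-1 : ℝ)..1, s ^ 4 * (1 - s ^ 2) ^ (((p : ℝ) - 3) / 2))
      = 3 / (p * (p + 2)) := by
  have hp' : (1 : ℝ) < p := by exact_mod_cast hp
  have ha : -1 < ((p : ℝ) - 3) / 2 := by linarith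
  have h₀ := integral_pow_add_two_mul_one_sub_sq_rpow ha 0
  have h₂ := integral_pow_add_two_mul_one_sub_sq_rpow ha 2
  simp only [pow_zero, one_mul, zero_add, CharP.cast_eq_zero] at h₀ h₂
  have hpos : 0 < ∫ s in (-1 : ℝ)..1, (1 - s ^ 2) ^ (((p : ℝ) - 3) / 2) :=
    intervalIntegral.intervalIntegral_pos_of_pos_on (intervalIntegrable_one_sub_sq_rpow ha)
      (fun s ⟨hs₁, hs₂⟩ => rpow_pos_of_pos (by nlinarith) _) (by norm_num)
  unfold c0
  constructor
  · field_simp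
    linarith
  · field_simp
    push_cast at h₀ h₂
    linear_combination (p : ℝ) * h₂ + 3 * h₀

theorem isLittleO_sub_taylor_two {g : ℝ → ℝ} {x₀ m : ℝ}
    (hg : ∀ᶠ x in 𝓝 x₀, DifferentiableAt ℝ g x) (hg' : HasDerivAt (deriv g) m x₀) :
    (fun x => g x - g x₀ - deriv g x₀ * (x - x₀) - m / 2 * (x - x₀) ^ 2)
      =o[𝓝 x₀] fun x => (x - x₀) ^ 2 := by
  obtain ⟨ε, hε, hball⟩ := Metric.eventually_nhds_iff_ball.mp hg
  have hnhds : 𝓝[Metric.ball x₀ ε] x₀ = 𝓝 x₀ :=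
    nhdsWithin_eq_nhds.mpr (Metric.ball_mem_nhds x₀ hε)
  have hderiv : ∀ x ∈ Metric.ball x₀ ε, HasDerivWithinAt
      (fun x => g x - g x₀ - deriv g x₀ * (x - x₀) - m / 2 * (x - x₀) ^ 2)
      (deriv g x - deriv g x₀ - m * (x - x₀)) (Metric.ball x₀ ε) x := by
    intro x hx
    refine HasDerivAt.hasDerivWithinAt ?_
    have h := ((((hball x hx).hasDerivAt.sub_const (g x₀)).sub
      (((hasDerivAt_id x).sub_const x₀).const_mul (deriv g x₀))).sub
      ((((hasDerivAt_id x).sub_const x₀).pow 2).const_mul (m / 2)))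
    refine h.congr_deriv ?_
    simp only [id, Nat.cast_ofNat]
    ring
  have hsmall : (fun x => deriv g x - deriv g x₀ - m * (x - x₀))
      =o[𝓝[Metric.ball x₀ ε] x₀] fun x => (x - x₀) ^ 1 := by
    simp only [hnhds, pow_one]
    simpa only [smul_eq_mul, mul_comm] using hasDerivAt_iff_isLittleO.mp hg'
  have h := (convex_ball x₀ ε).isLittleO_pow_succ_real (Metric.mem_ball_self hε) hderiv hsmall
  rw [hnhds] at h
  simpa using h

theorem eventually_differentiableAt_log_comp {f : ℝ → ℝ} {x₀ : ℝ}
    (hf : ∀ᶠ x in 𝓝 x₀, DifferentiableAt ℝ f x) (hx₀ : f x₀ ≠ 0) :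
    ∀ᶠ x in 𝓝 x₀, DifferentiableAt ℝ (fun x => log (f x)) x := by
  filter_upwards [hf, hf.self_of_nhds.continuousAt.eventually_ne hx₀] with x hx hx0
  exact hx.log hx0

theorem hasDerivAt_deriv_log_comp {f : ℝ → ℝ} {x₀ : ℝ}
    (hf : ∀ᶠ x in 𝓝 x₀, DifferentiableAt ℝ f x) (hf' : DifferentiableAt ℝ (deriv f) x₀)
    (hx₀ : f x₀ ≠ 0) :
    HasDerivAt (deriv fun x => log (f x))
      ((deriv (deriv f) x₀ * f x₀ - deriv f x₀ * deriv f x₀) / f x₀ ^ 2) x₀ := by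
  have hne : ∀ᶠ x in 𝓝 x₀, f x ≠ 0 := hf.self_of_nhds.continuousAt.eventually_ne hx₀
  refine (hf'.hasDerivAt.div hf.self_of_nhds.hasDerivAt hx₀).congr_of_eventuallyEq ?_
  filter_upwards [hf, hne] with x hx hx0
  exact deriv.log hx hx0

theorem isLittleO_log_sub_taylor_two {f : ℝ → ℝ}
    (hf : ∀ᶠ x in 𝓝 0, DifferentiableAt ℝ f x) (hf' : DifferentiableAt ℝ (deriv f) 0)
    (hf0 : f 0 = 1) (hf'0 : deriv f 0 = 1) :
    (fun x => log (f x) - x - (deriv (deriv f) 0 - 1) / 2 * x ^ 2)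
      =o[𝓝 0] fun x => x ^ 2 := by
  have hne : f 0 ≠ 0 := by rw [hf0]; exact one_ne_zero
  have h := isLittleO_sub_taylor_two (eventually_differentiableAt_log_comp hf hne)
    (hasDerivAt_deriv_log_comp hf hf' hne)
  simpa [deriv.log hf.self_of_nhds hne, hf0, hf'0] using h

theorem dist_mul_sq_zero_le {t s : ℝ} (hs : s ∈ Set.Icc (-1 : ℝ) 1) :
    dist (t * s ^ 2) 0 ≤ dist t 0 := by
  have : s ^ 2 ≤ 1 := by nlinarith [hs.1, hs.2]
  simp only [dist_zero_right, norm_mul, norm_pow, Real.norm_eq_abs, sq_abs]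
  exact mul_le_of_le_one_right (abs_nonneg t) this

section Integrals

variable {w g : ℝ → ℝ} {κ : ℕ → ℝ}

theorem eventually_intervalIntegrable_mul_comp_mul_sq (hw : IntervalIntegrable w volume (-1) 1)
    (hg : ∀ᶠ x in 𝓝 0, ContinuousAt g x) (hκ : Tendsto κ atTop (𝓝 0)) :
    ∀ᶠ n in atTop, IntervalIntegrable (fun s => w s * g (κ n * s ^ 2)) volume (-1) 1 := by
  obtain ⟨δ, hδ, hgδ⟩ := Metric.eventually_nhds_iff.mp hg
  filter_upwards [hκ.eventually (Metric.ball_mem_nhds 0 hδ)] with n hn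
  refine hw.mul_continuousOn fun s hs => ?_
  rw [Set.uIcc_of_le (by norm_num)] at hs
  exact (hgδ ((dist_mul_sq_zero_le hs).trans_lt hn)).comp_continuousWithinAt
    (f := fun s => κ n * s ^ 2) (by fun_prop)

theorem isLittleO_integral_mul_comp_mul_sq (hw : IntervalIntegrable w volume (-1) 1)
    (hg : g =o[𝓝 0] fun x => x ^ 2) (hκ : Tendsto κ atTop (𝓝 0)) :
    (fun n => ∫ s in (-1 : ℝ)..1, w s * g (κ n * s ^ 2)) =o[atTop] fun n => κ n ^ 2 := by
  rw [isLittleO_iff]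
  intro c hc
  set C := ∫ s in (-1 : ℝ)..1, ‖w s‖
  have hC : 0 ≤ C := intervalIntegral.integral_nonneg (by norm_num) fun _ _ => norm_nonneg _
  obtain ⟨δ, hδ, hgδ⟩ :=
    Metric.eventually_nhds_iff.mp (hg.def (by positivity : 0 < c / (C + 1)))
  filter_upwards [hκ.eventually (Metric.ball_mem_nhds 0 hδ)] with n hn
  have hbound : ∀ s ∈ Set.Ioc (-1 : ℝ) 1,
      ‖w s * g (κ n * s ^ 2)‖ ≤ ‖w s‖ * (c / (C + 1) * κ n ^ 2) := by
    intro s hs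
    have hs' : s ∈ Set.Icc (-1 : ℝ) 1 := Set.Ioc_subset_Icc_self hs
    have hs2 : s ^ 2 * s ^ 2 ≤ 1 := by
      have : s ^ 2 ≤ 1 := by nlinarith [hs'.1, hs'.2]
      nlinarith
    rw [norm_mul]
    gcongr
    calc ‖g (κ n * s ^ 2)‖ ≤ c / (C + 1) * ‖(κ n * s ^ 2) ^ 2‖ :=
          hgδ ((dist_mul_sq_zero_le hs').trans_lt hn)
      _ ≤ c / (C + 1) * κ n ^ 2 := by
          rw [norm_of_nonneg (sq_nonneg _), mul_pow, ← pow_mul,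
            show s ^ (2 * 2) = s ^ 2 * s ^ 2 by ring]
          gcongr
          exact mul_le_of_le_one_right (sq_nonneg _) hs2
  calc ‖∫ s in (-1 : ℝ)..1, w s * g (κ n * s ^ 2)‖
      ≤ ∫ s in (-1 : ℝ)..1, ‖w s‖ * (c / (C + 1) * κ n ^ 2) :=
        intervalIntegral.norm_integral_le_of_norm_le (by norm_num)
          (Eventually.of_forall hbound) (hw.norm.mul_const _)
    _ = C / (C + 1) * (c * ‖κ n ^ 2‖) := by
        rw [intervalIntegral.integral_mul_const, norm_of_nonneg (sq_nonneg _)]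
        ring
    _ ≤ c * ‖κ n ^ 2‖ :=
        mul_le_of_le_one_left (by positivity) ((div_le_one (by positivity)).mpr (by linarith))

end Integrals

theorem c0_mul_integral_sub_taylor_two {p : ℕ} (hp : 1 < p) {L : ℝ → ℝ} {t m : ℝ}
    (hL : IntervalIntegrable (fun s => (1 - s ^ 2) ^ (((p : ℝ) - 3) / 2) * L (t * s ^ 2))
      volume (-1) 1) :
    c0 p * ∫ s in (-1 : ℝ)..1,
        (1 - s ^ 2) ^ (((p : ℝ) - 3) / 2)
          * (L (t * s ^ 2) - t * s ^ 2 - m / 2 * (t * s ^ 2) ^ 2)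
      = c0 p * (∫ s in (-1 : ℝ)..1, (1 - s ^ 2) ^ (((p : ℝ) - 3) / 2) * L (t * s ^ 2))
        - (t / p + 3 * t ^ 2 / (2 * p * (p + 2)) * m) := by
  have ha : -1 < ((p : ℝ) - 3) / 2 := by
    have : (1 : ℝ) < p := by exact_mod_cast hp
    linarith
  obtain ⟨h₂, h₄⟩ := c0_mul_integral_sq_and_pow_four hp
  have hi := intervalIntegrable_pow_mul_one_sub_sq_rpow ha
  have hsplit : (fun s => (1 - s ^ 2) ^ (((p : ℝ) - 3) / 2)
        * (L (t * s ^ 2) - t * s ^ 2 - m / 2 * (t * s ^ 2) ^ 2))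
      = fun s => ((1 - s ^ 2) ^ (((p : ℝ) - 3) / 2) * L (t * s ^ 2)
        - t * (s ^ 2 * (1 - s ^ 2) ^ (((p : ℝ) - 3) / 2)))
        - m / 2 * t ^ 2 * (s ^ 4 * (1 - s ^ 2) ^ (((p : ℝ) - 3) / 2)) := by
    funext s
    ring
  rw [hsplit, intervalIntegral.integral_sub (hL.sub ((hi 2).const_mul t)) ((hi 4).const_mul _),
    intervalIntegral.integral_sub hL ((hi 2).const_mul t), intervalIntegral.integral_const_mul,
    intervalIntegral.integral_const_mul]
  have hp0 : (p : ℝ) ≠ 0 := by positivity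
  rw [show t / p + 3 * t ^ 2 / (2 * p * (p + 2)) * m
      = t * (1 / p) + m / 2 * t ^ 2 * (3 / (p * (p + 2))) by field_simp]
  linear_combination (-t) * h₂ - m / 2 * t ^ 2 * h₄

theorem first_log_moment_expansion_general
    (p : ℕ) (hp : 2 ≤ p)
    (f : ℝ → ℝ)
    (hf_diff : ∀ᶠ x in 𝓝 (0:ℝ), DifferentiableAt ℝ f x)
    (hf_diff2 : DifferentiableAt ℝ (deriv f) 0)
    (hf0 : f 0 = 1) (hf'0 : deriv f 0 = 1)
    (κ : ℕ → ℝ) (hκ : Tendsto κ atTop (𝓝 (0:ℝ))) :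
    (fun n =>
      c0 p * (∫ s in (-1:ℝ)..1,
          (1 - s ^ 2) ^ (((p : ℝ) - 3) / 2) * Real.log (f (κ n * s ^ 2)))
        - (κ n / (p:ℝ) + (3 * κ n ^ 2 / (2 * (p:ℝ) * ((p:ℝ) + 2))) * (deriv (deriv f) 0 - 1)))
      =o[atTop] (fun n => κ n ^ 2) := by
  have hw := intervalIntegrable_one_sub_sq_rpow (a := ((p : ℝ) - 3) / 2)
    (by linarith [show (2 : ℝ) ≤ p by exact_mod_cast hp])
  have hlog := eventually_differentiableAt_log_comp hf_diff (by rw [hf0]; exact one_ne_zero)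
  refine ((isLittleO_integral_mul_comp_mul_sq hw (isLittleO_log_sub_taylor_two hf_diff hf_diff2
    hf0 hf'0) hκ).const_mul_left (c0 p)).congr' ?_ EventuallyEq.rfl
  filter_upwards [eventually_intervalIntegrable_mul_comp_mul_sq hw
    (hlog.mono fun _ hx => hx.continuousAt) hκ] with n hn
  exact c0_mul_integral_sub_taylor_two (L := fun x => log (f x)) hp hn

/-- expansion of `E_{n1}`.
For `f ∈ 𝓕` and nonzero `κ_n → 0`,
`E_{n1} = c_p ∫_{-1}^1 (1-s²)^{(p-3)/2} log f(κ_n s²) ds`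
satisfies `E_{n1} = κ_n/p + (3κ_n²/(2p(p+2)))(f''(0) - 1) + o(κ_n²)`. -/
theorem first_log_moment_expansion
    (p : ℕ) (hp : 2 ≤ p)
    (f : ℝ → ℝ) (hf_pos : ∀ x, 0 < f x) (hf_mono : Monotone f)
    (hf_diff : ∀ᶠ x in 𝓝 (0:ℝ), DifferentiableAt ℝ f x)
    (hf_diff2 : DifferentiableAt ℝ (deriv f) 0)
    (hf0 : f 0 = 1) (hf'0 : deriv f 0 = 1)
    (κ : ℕ → ℝ) (hκ0 : ∀ n, κ n ≠ 0) (hκ : Tendsto κ atTop (𝓝 (0:ℝ))) :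
    (fun n =>
      c0 p * (∫ s in (-1:ℝ)..1,
          (1 - s ^ 2) ^ (((p : ℝ) - 3) / 2) * Real.log (f (κ n * s ^ 2)))
        - (κ n / (p:ℝ) + (3 * κ n ^ 2 / (2 * (p:ℝ) * ((p:ℝ) + 2))) * (deriv (deriv f) 0 - 1)))
      =o[atTop] (fun n => κ n ^ 2) :=
  first_log_moment_expansion_general p hp f hf_diff hf_diff2 hf0 hf'0 κ hκ

end
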